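/- Let f : ℝⁿ → ℝⁿ be twice continuously differentiable with f(0) = 0, let A_cl := Df(0), and suppose A_cl is Schur stable (all eigenvalues have modulus < 1). Let Q, and Q' := Q be symmetric positive definite, ρ > 1, and let P solve A_clᵀ P A_cl + ρ Q − P = 0. Then there exists γ > 0 such that with p(x) := xᵀ P x and X_f := {x : p(x) ≤ γ}, we have p(f(x)) − p(x) ≤ −xᵀ Q x for all x ∈ X_f. -/

import Mathlib

open Matrix Filter
open scoped RealInnerProductSpace ENNReal NNReal

private theorem tdns_posdef_lower (n : ℕ) (hn : 0 < n) (Q : Matrix (Fin n) (Fin n) ℝ)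
    (hQ : Q.PosDef) :
    ∃ c > (0:ℝ), ∀ x : EuclideanSpace ℝ (Fin n), c * ‖x‖^2 ≤ ⟪x, Matrix.toEuclideanLin Q x⟫ := by
  have hpos : ∀ x : EuclideanSpace ℝ (Fin n), x ≠ 0 → 0 < ⟪x, Matrix.toEuclideanLin Q x⟫ := by
    intro x hx
    have := hQ.dotProduct_mulVec_pos (x := (WithLp.equiv 2 _) x) (by simpa using hx)
    simpa [Matrix.toEuclideanLin_apply, inner, dotProduct, Matrix.mulVec, mul_comm] using this
  set L := LinearMap.toContinuousLinearMap (Matrix.toEuclideanLin Q) with hL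
  have hLapp : ∀ x, L x = Matrix.toEuclideanLin Q x := fun x => rfl
  have hcont : Continuous fun x : EuclideanSpace ℝ (Fin n) => ⟪x, L x⟫ :=
    continuous_id.inner L.continuous
  have hcompact : IsCompact (Metric.sphere (0 : EuclideanSpace ℝ (Fin n)) 1) :=
    isCompact_sphere _ _
  have hne : (Metric.sphere (0 : EuclideanSpace ℝ (Fin n)) 1).Nonempty := by
    refine ⟨EuclideanSpace.single ⟨0, hn⟩ 1, ?_⟩
    simp [EuclideanSpace.norm_single]
  obtain ⟨x0, hx0mem, hx0min⟩ := hcompact.exists_isMinOn hne hcont.continuousOn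
  have hx0ne : x0 ≠ 0 := by
    intro h
    have : ‖x0‖ = 1 := by simpa using hx0mem
    rw [h] at this; simp at this
  refine ⟨⟪x0, L x0⟫, by rw [hLapp]; exact hpos x0 hx0ne, ?_⟩
  intro x
  rcases eq_or_ne x 0 with rfl | hx
  · simp
  · have hnx : ‖x‖ ≠ 0 := norm_ne_zero_iff.mpr hx
    set u : EuclideanSpace ℝ (Fin n) := (‖x‖)⁻¹ • x with hu
    have hum : u ∈ Metric.sphere (0 : EuclideanSpace ℝ (Fin n)) 1 := by
      simp [hu, norm_smul, abs_of_nonneg, inv_mul_cancel₀ hnx]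
    have hmin := hx0min hum
    have hmin' : ⟪x0, L x0⟫ ≤ ⟪u, L u⟫ := hmin
    have hscale : ⟪u, L u⟫ = (‖x‖)⁻¹^2 * ⟪x, L x⟫ := by
      simp only [hu, real_inner_smul_left, inner_smul_right, L.map_smul]
      ring
    rw [hscale] at hmin'
    have h2 : (0:ℝ) < ‖x‖^2 := by positivity
    show ⟪x0, L x0⟫ * ‖x‖^2 ≤ ⟪x, L x⟫
    calc ⟪x0, L x0⟫ * ‖x‖^2 ≤ ((‖x‖)⁻¹^2 * ⟪x, L x⟫) * ‖x‖^2 :=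
          mul_le_mul_of_nonneg_right hmin' h2.le
      _ = ⟪x, L x⟫ := by field_simp

private theorem tdns_pow_opnorm_small (n : ℕ) (hn : 0 < n) (B : Matrix (Fin n) (Fin n) ℂ)
    (hS : ∀ μ ∈ spectrum ℂ B, ‖μ‖ < 1) (c : ℝ) (hc : 0 < c) :
    ∃ N : ℕ, 1 ≤ N ∧ ‖(Matrix.toEuclideanCLM (n := Fin n) (𝕜 := ℂ) B)^N‖ < c := by
  set T := Matrix.toEuclideanCLM (n := Fin n) (𝕜 := ℂ) B with hT
  haveI : Nontrivial (EuclideanSpace ℂ (Fin n)) := by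
    refine ⟨0, EuclideanSpace.single ⟨0, hn⟩ 1, ?_⟩
    intro h
    have := congrArg (fun v : EuclideanSpace ℂ (Fin n) => v ⟨0, hn⟩) h
    simp at this
  haveI : Nontrivial (EuclideanSpace ℂ (Fin n) →L[ℂ] EuclideanSpace ℂ (Fin n)) := by
    infer_instance
  have hspec : spectrum ℂ T = spectrum ℂ B :=
    AlgEquiv.spectrum_eq (Matrix.toEuclideanCLM (n := Fin n) (𝕜 := ℂ)) B
  have hr : spectralRadius ℂ T < 1 := by
    have := spectrum.spectralRadius_lt_of_forall_lt T (r := 1) ?_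
    · simpa using this
    · intro z hz
      rw [hspec] at hz
      exact_mod_cast hS z hz
  obtain ⟨r', hr1, hr2⟩ := exists_between hr
  have hg := spectrum.pow_nnnorm_pow_one_div_tendsto_nhds_spectralRadius T
  have hev1 : ∀ᶠ k : ℕ in atTop, (‖T ^ k‖₊ : ℝ≥0∞) ^ (1 / (k:ℝ)) < r' :=
    hg.eventually_lt_const hr1
  have hpow0 : Tendsto (fun k : ℕ => r' ^ k) atTop (nhds 0) :=
    ENNReal.tendsto_pow_atTop_nhds_zero_of_lt_one hr2
  have hev2 : ∀ᶠ k : ℕ in atTop, r' ^ k < ENNReal.ofReal c :=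
    hpow0.eventually_lt_const (by simpa using hc)
  obtain ⟨N, ⟨h1, h2⟩, h3⟩ := ((hev1.and hev2).and (eventually_ge_atTop 1)).exists
  refine ⟨N, h3, ?_⟩
  have hNne : (N:ℝ) ≠ 0 := by positivity
  have key : (‖T ^ N‖₊ : ℝ≥0∞) < r' ^ N := by
    have := ENNReal.rpow_lt_rpow h1 (by positivity : (0:ℝ) < (N:ℝ))
    rwa [← ENNReal.rpow_mul, one_div, inv_mul_cancel₀ hNne, ENNReal.rpow_one,
      ENNReal.rpow_natCast] at this
  have : (‖T ^ N‖₊ : ℝ≥0∞) < ENNReal.ofReal c := key.trans h2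
  rw [show (‖T ^ N‖₊ : ℝ≥0∞) = ENNReal.ofReal ‖T ^ N‖ from (ofReal_norm _).symm, ENNReal.ofReal_lt_ofReal_iff hc] at this
  exact this

private noncomputable def tdnsIota (n : ℕ) (v : EuclideanSpace ℝ (Fin n)) :
    EuclideanSpace ℂ (Fin n) :=
  (WithLp.equiv 2 _).symm (fun i => (v i : ℂ))

private theorem tdnsIota_norm (n : ℕ) (v : EuclideanSpace ℝ (Fin n)) :
    ‖tdnsIota n v‖ = ‖v‖ := by
  rw [EuclideanSpace.norm_eq, EuclideanSpace.norm_eq]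
  congr 1
  refine Finset.sum_congr rfl fun i _ => ?_
  simp [tdnsIota]

private theorem tdnsIota_comm (n : ℕ) (M : Matrix (Fin n) (Fin n) ℝ)
    (v : EuclideanSpace ℝ (Fin n)) :
    Matrix.toEuclideanCLM (n := Fin n) (𝕜 := ℂ) (M.map (algebraMap ℝ ℂ)) (tdnsIota n v)
      = tdnsIota n (Matrix.toEuclideanLin M v) := by
  have h : Matrix.toEuclideanCLM (n := Fin n) (𝕜 := ℂ) (M.map (algebraMap ℝ ℂ))
      ((WithLp.equiv 2 _).symm (fun i => (v i : ℂ)))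
      = (WithLp.equiv 2 _).symm ((M.map (algebraMap ℝ ℂ)) *ᵥ (fun i => (v i : ℂ))) := rfl
  rw [tdnsIota, h]
  apply congrArg
  funext i
  simp [Matrix.mulVec, dotProduct, Matrix.toEuclideanLin_apply, tdnsIota]

private theorem tdns_norm_iter_le (n : ℕ) (N : ℕ) (A : Matrix (Fin n) (Fin n) ℝ)
    (x : EuclideanSpace ℝ (Fin n)) :
    ‖Matrix.toEuclideanLin (A ^ N) x‖
      ≤ ‖(Matrix.toEuclideanCLM (n := Fin n) (𝕜 := ℂ) (A.map (algebraMap ℝ ℂ))) ^ N‖ * ‖x‖ := by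
  have hmap : (A ^ N).map (algebraMap ℝ ℂ) = (A.map (algebraMap ℝ ℂ)) ^ N := by
    simp only [← RingHom.mapMatrix_apply, map_pow]
  have h1 : (Matrix.toEuclideanCLM (n := Fin n) (𝕜 := ℂ) (A.map (algebraMap ℝ ℂ))) ^ N
      = Matrix.toEuclideanCLM (n := Fin n) (𝕜 := ℂ) ((A ^ N).map (algebraMap ℝ ℂ)) := by
    rw [hmap, map_pow]
  calc ‖Matrix.toEuclideanLin (A ^ N) x‖ = ‖tdnsIota n (Matrix.toEuclideanLin (A ^ N) x)‖ :=
        (tdnsIota_norm _ _).symm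
    _ = ‖Matrix.toEuclideanCLM (n := Fin n) (𝕜 := ℂ) ((A ^ N).map (algebraMap ℝ ℂ)) (tdnsIota n x)‖ := by
        rw [tdnsIota_comm]
    _ = ‖((Matrix.toEuclideanCLM (n := Fin n) (𝕜 := ℂ) (A.map (algebraMap ℝ ℂ))) ^ N) (tdnsIota n x)‖ := by
        rw [h1]
    _ ≤ ‖(Matrix.toEuclideanCLM (n := Fin n) (𝕜 := ℂ) (A.map (algebraMap ℝ ℂ))) ^ N‖ * ‖tdnsIota n x‖ :=
        ContinuousLinearMap.le_opNorm _ _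
    _ = _ := by rw [tdnsIota_norm]

set_option maxHeartbeats 2000000 in
theorem terminal_descent_for_nonlinear_system (n : ℕ)
    (f : EuclideanSpace ℝ (Fin n) → EuclideanSpace ℝ (Fin n))
    (hf : ContDiff ℝ 2 f) (hf0 : f 0 = 0)
    (Acl : Matrix (Fin n) (Fin n) ℝ)
    (hAcl : ∀ x, Matrix.toEuclideanLin Acl x = fderiv ℝ f 0 x)
    (hSchur : ∀ μ ∈ spectrum ℂ (Acl.map (algebraMap ℝ ℂ)), ‖μ‖ < 1)
    (Q P : Matrix (Fin n) (Fin n) ℝ) (hQ : Q.PosDef) (hPsymm : P.IsSymm)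
    (ρ : ℝ) (hρ : 1 < ρ)
    (hLyap : Aclᵀ * P * Acl + ρ • Q - P = 0) :
    ∃ γ > (0 : ℝ), ∀ x : EuclideanSpace ℝ (Fin n),
      ⟪x, Matrix.toEuclideanLin P x⟫ ≤ γ →
      ⟪f x, Matrix.toEuclideanLin P (f x)⟫ - ⟪x, Matrix.toEuclideanLin P x⟫
        ≤ -⟪x, Matrix.toEuclideanLin Q x⟫ := by
  rcases Nat.eq_zero_or_pos n with hn | hn
  · subst hn
    refine ⟨1, one_pos, fun x _ => ?_⟩
    have h0 : ∀ v : EuclideanSpace ℝ (Fin 0), v = 0 := fun v => Subsingleton.elim v 0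
    rw [h0 x, h0 (f 0)]
    simp
  obtain ⟨cQ, hcQ, hQlb⟩ := tdns_posdef_lower n hn Q hQ
  -- operator norm bounds
  obtain ⟨CP, hCP0, hPb⟩ : ∃ CP : ℝ, 0 ≤ CP ∧ ∀ a b : EuclideanSpace ℝ (Fin n),
      |⟪a, Matrix.toEuclideanLin P b⟫| ≤ CP * ‖a‖ * ‖b‖ := by
    refine ⟨‖LinearMap.toContinuousLinearMap (Matrix.toEuclideanLin P)‖, norm_nonneg _, ?_⟩
    intro a b
    have h1 : |⟪a, Matrix.toEuclideanLin P b⟫| ≤ ‖a‖ * ‖Matrix.toEuclideanLin P b‖ :=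
      abs_real_inner_le_norm _ _
    have h3 : ‖Matrix.toEuclideanLin P b‖ ≤
        ‖LinearMap.toContinuousLinearMap (Matrix.toEuclideanLin P)‖ * ‖b‖ :=
      (LinearMap.toContinuousLinearMap (Matrix.toEuclideanLin P)).le_opNorm b
    nlinarith [norm_nonneg a, norm_nonneg (LinearMap.toContinuousLinearMap
      (Matrix.toEuclideanLin P))]
  obtain ⟨CA, hCA0, hAb⟩ : ∃ CA : ℝ, 0 ≤ CA ∧ ∀ v : EuclideanSpace ℝ (Fin n),
      ‖Matrix.toEuclideanLin Acl v‖ ≤ CA * ‖v‖ :=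
    ⟨‖LinearMap.toContinuousLinearMap (Matrix.toEuclideanLin Acl)‖, norm_nonneg _,
      fun v => (LinearMap.toContinuousLinearMap (Matrix.toEuclideanLin Acl)).le_opNorm v⟩
  -- symmetry of P
  have hsymmP : ∀ a b : EuclideanSpace ℝ (Fin n),
      ⟪a, Matrix.toEuclideanLin P b⟫ = ⟪b, Matrix.toEuclideanLin P a⟫ := by
    intro a b
    have hherm : P.IsHermitian := by
      rwa [Matrix.IsHermitian, Matrix.conjTranspose_eq_transpose_of_trivial]
    have hsym := Matrix.isHermitian_iff_isSymmetric.mp hherm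
    rw [← hsym a b, real_inner_comm]
  -- the Lyapunov pointwise identity
  have hmul : ∀ (M N : Matrix (Fin n) (Fin n) ℝ) x,
      Matrix.toEuclideanLin (M * N) x = Matrix.toEuclideanLin M (Matrix.toEuclideanLin N x) := by
    intro M N x; simp [Matrix.toEuclideanLin_apply, Matrix.mulVec_mulVec]
  have key : ∀ v : EuclideanSpace ℝ (Fin n),
      ⟪v, Matrix.toEuclideanLin P v⟫ =
        ⟪Matrix.toEuclideanLin Acl v, Matrix.toEuclideanLin P (Matrix.toEuclideanLin Acl v)⟫
          + ρ * ⟪v, Matrix.toEuclideanLin Q v⟫ := by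
    intro v
    have hadj : Matrix.toEuclideanLin (Aclᵀ) = LinearMap.adjoint (Matrix.toEuclideanLin Acl) := by
      rw [← Matrix.toEuclideanLin_conjTranspose_eq_adjoint,
        Matrix.conjTranspose_eq_transpose_of_trivial]
    have hM : Aclᵀ * P * Acl = P - ρ • Q := by
      have h := hLyap
      rw [sub_eq_zero] at h
      linear_combination (norm := module) h
    have step : ⟪Matrix.toEuclideanLin Acl v,
        Matrix.toEuclideanLin P (Matrix.toEuclideanLin Acl v)⟫
        = ⟪v, Matrix.toEuclideanLin (Aclᵀ * P * Acl) v⟫ := by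
      rw [hmul, hmul, hadj, LinearMap.adjoint_inner_right]
    rw [step, hM]
    simp [inner_sub_right, inner_smul_right]
    try ring
  have hQnn : ∀ v : EuclideanSpace ℝ (Fin n), 0 ≤ ⟪v, Matrix.toEuclideanLin Q v⟫ := by
    intro v
    have := hQlb v
    nlinarith [sq_nonneg ‖v‖]
  -- lower bound for P
  have hc' : (0:ℝ) < min 1 (cQ / (CP + 1)) := lt_min one_pos (by positivity)
  obtain ⟨N, hN1, hTN⟩ := tdns_pow_opnorm_small n hn (Acl.map (algebraMap ℝ ℂ)) hSchur _ hc'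
  set c := min 1 (cQ / (CP + 1)) with hcdef
  have hc1 : c ≤ 1 := min_le_left _ _
  have hc2 : c * (CP + 1) ≤ cQ := by
    have := min_le_right 1 (cQ / (CP + 1))
    rw [le_div_iff₀ (by positivity : (0:ℝ) < CP + 1)] at this
    exact this
  have hCPcc : CP * c * c ≤ cQ := by nlinarith [hc'.le]
  have hPlb : ∀ x : EuclideanSpace ℝ (Fin n),
      (ρ - 1) * cQ * ‖x‖^2 ≤ ⟪x, Matrix.toEuclideanLin P x⟫ := by
    intro x
    set y : ℕ → EuclideanSpace ℝ (Fin n) := fun j => Matrix.toEuclideanLin (Acl ^ j) x with hy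
    have hy0 : y 0 = x := by
      simp only [hy, pow_zero]
      simp [Matrix.toEuclideanLin_apply, Matrix.one_mulVec]
    have hystep : ∀ j, y (j + 1) = Matrix.toEuclideanLin Acl (y j) := by
      intro j
      simp only [hy]
      rw [pow_succ']
      exact hmul _ _ _
    have hstep : ∀ j, ⟪y j, Matrix.toEuclideanLin P (y j)⟫
        = ⟪y (j+1), Matrix.toEuclideanLin P (y (j+1))⟫
          + ρ * ⟪y j, Matrix.toEuclideanLin Q (y j)⟫ := by
      intro j
      rw [hystep j]
      exact key (y j)
    have hmono : ∀ j, ⟪y (j+1), Matrix.toEuclideanLin P (y (j+1))⟫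
        ≤ ⟪y j, Matrix.toEuclideanLin P (y j)⟫ := by
      intro j
      have h := hstep j
      nlinarith [hQnn (y j)]
    have hchain : ∀ j, ⟪y (j+1), Matrix.toEuclideanLin P (y (j+1))⟫
        ≤ ⟪y 1, Matrix.toEuclideanLin P (y 1)⟫ := by
      intro j
      induction j with
      | zero => exact le_refl _
      | succ k ih => exact (hmono (k+1)).trans ih
    obtain ⟨m, hm⟩ : ∃ m, N = m + 1 := ⟨N - 1, (Nat.succ_pred_eq_of_pos hN1).symm⟩
    have hqN : ⟪y N, Matrix.toEuclideanLin P (y N)⟫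
        ≤ ⟪y 1, Matrix.toEuclideanLin P (y 1)⟫ := by rw [hm]; exact hchain m
    have hq0 : ⟪y 0, Matrix.toEuclideanLin P (y 0)⟫
        = ⟪y 1, Matrix.toEuclideanLin P (y 1)⟫
          + ρ * ⟪y 0, Matrix.toEuclideanLin Q (y 0)⟫ := hstep 0
    have hyN : ‖y N‖ ≤ c * ‖x‖ := by
      have h1 := tdns_norm_iter_le n N Acl x
      have h2 : ‖(Matrix.toEuclideanCLM (n := Fin n) (𝕜 := ℂ)
          (Acl.map (algebraMap ℝ ℂ))) ^ N‖ * ‖x‖ ≤ c * ‖x‖ :=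
        mul_le_mul_of_nonneg_right hTN.le (norm_nonneg x)
      exact h1.trans h2
    have hqNb := hPb (y N) (y N)
    have hsq : ‖y N‖ * ‖y N‖ ≤ (c * ‖x‖) * (c * ‖x‖) :=
      mul_self_le_mul_self (norm_nonneg _) hyN
    have hcQx : cQ * ‖x‖^2 ≤ ⟪x, Matrix.toEuclideanLin Q x⟫ := hQlb x
    have habs := abs_le.mp hqNb
    rw [hy0] at hq0
    nlinarith [habs.1, hq0, hqN, hsq, hcQx, hCPcc, sq_nonneg ‖x‖, hQnn x, norm_nonneg (y N),
      norm_nonneg x, hc'.le, hCP0]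
  have hcP : (0:ℝ) < (ρ - 1) * cQ := by nlinarith
  -- Taylor / little-o bound
  have hδ0 : (0:ℝ) < min 1 ((ρ - 1) * cQ / (2 * CA * CP + CP + 1)) :=
    lt_min one_pos (by positivity)
  set δ := min 1 ((ρ - 1) * cQ / (2 * CA * CP + CP + 1)) with hδdef
  have hδ1 : δ ≤ 1 := min_le_left _ _
  have hδ2 : δ * (2 * CA * CP + CP + 1) ≤ (ρ - 1) * cQ := by
    have := min_le_right 1 ((ρ - 1) * cQ / (2 * CA * CP + CP + 1))
    rw [le_div_iff₀ (by positivity : (0:ℝ) < 2 * CA * CP + CP + 1)] at this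
    exact this
  have hder : HasFDerivAt f (fderiv ℝ f 0) 0 :=
    ((hf.differentiable two_ne_zero) 0).hasFDerivAt
  have hlo : (fun h : EuclideanSpace ℝ (Fin n) => f h - Matrix.toEuclideanLin Acl h)
      =o[nhds 0] fun h => h := by
    have := hder.isLittleO
    simp only [hf0, sub_zero] at this
    refine this.congr' ?_ (by rfl)
    filter_upwards with h
    rw [hAcl h]
  have hev := hlo.def hδ0
  rw [Metric.eventually_nhds_iff] at hev
  obtain ⟨ε', hε'0, hε'⟩ := hev
  set ε := ε' / 2 with hεdef
  have hε0 : (0:ℝ) < ε := by positivity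
  refine ⟨(ρ - 1) * cQ * ε^2, by positivity, ?_⟩
  intro x hx
  -- from the sublevel set, x is small
  have hxsmall : ‖x‖ ≤ ε := by
    have h1 := hPlb x
    have h2 : (ρ - 1) * cQ * ‖x‖^2 ≤ (ρ - 1) * cQ * ε^2 := le_trans h1 hx
    have h3 : ‖x‖^2 ≤ ε^2 := le_of_mul_le_mul_left (by linarith [h2]) hcP
    nlinarith [norm_nonneg x, hε0.le]
  have hxlt : dist x (0 : EuclideanSpace ℝ (Fin n)) < ε' := by
    rw [dist_zero_right]
    calc ‖x‖ ≤ ε := hxsmall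
      _ < ε' := by rw [hεdef]; linarith
  have hE : ‖f x - Matrix.toEuclideanLin Acl x‖ ≤ δ * ‖x‖ := by
    have := hε' hxlt
    simpa using this
  -- expand
  set e := f x - Matrix.toEuclideanLin Acl x with hedef
  have hfx : f x = Matrix.toEuclideanLin Acl x + e := by rw [hedef]; abel
  set a := Matrix.toEuclideanLin Acl x with hadef
  have hexp : ⟪f x, Matrix.toEuclideanLin P (f x)⟫
      = ⟪a, Matrix.toEuclideanLin P a⟫ + 2 * ⟪a, Matrix.toEuclideanLin P e⟫
        + ⟪e, Matrix.toEuclideanLin P e⟫ := by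
    rw [hfx]
    rw [map_add, inner_add_left, inner_add_right, inner_add_right]
    have := hsymmP e a
    linarith [this]
  have hkey := key x
  have hcross : |⟪a, Matrix.toEuclideanLin P e⟫| ≤ CP * (CA * ‖x‖) * (δ * ‖x‖) := by
    have h1 := hPb a e
    have h2 : ‖a‖ ≤ CA * ‖x‖ := hAb x
    have h3 : ‖e‖ ≤ δ * ‖x‖ := hE
    have : CP * ‖a‖ * ‖e‖ ≤ CP * (CA * ‖x‖) * (δ * ‖x‖) := by
      apply mul_le_mul
      · exact mul_le_mul_of_nonneg_left h2 hCP0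
      · exact h3
      · exact norm_nonneg e
      · positivity
    linarith
  have hself : |⟪e, Matrix.toEuclideanLin P e⟫| ≤ CP * (δ * ‖x‖) * (δ * ‖x‖) := by
    have h1 := hPb e e
    have h3 : ‖e‖ ≤ δ * ‖x‖ := hE
    have : CP * ‖e‖ * ‖e‖ ≤ CP * (δ * ‖x‖) * (δ * ‖x‖) := by
      apply mul_le_mul
      · exact mul_le_mul_of_nonneg_left h3 hCP0
      · exact h3
      · exact norm_nonneg e
      · positivity
    linarith
  have hQx : cQ * ‖x‖^2 ≤ ⟪x, Matrix.toEuclideanLin Q x⟫ := hQlb x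
  have hcross' := abs_le.mp hcross
  have hself' := abs_le.mp hself
  -- final arithmetic
  have hδb : 2 * (CP * CA * δ) + CP * δ * δ ≤ (ρ - 1) * cQ := by
    nlinarith [hδ0.le, hCP0, hCA0]
  nlinarith [hexp, hkey, hcross'.2, hself'.2, hQx, sq_nonneg ‖x‖, hδ0.le, hQnn x,
    mul_le_mul_of_nonneg_right hδb (sq_nonneg ‖x‖)]
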